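/- arXiv:2007.06614 — 2 statements merged into one kernel-verified Lean document; each statement's English description precedes it below -/
import Mathlib

section
/- Let A be an n×n SPD matrix and P an n×n_c matrix of full column rank. Then the smallest eigenvalue λ of A satisfies λ ≤ λ_c · ‖(PᵗP)⁻¹‖, where λ_c is the smallest eigenvalue of PᵗAP. Equivalently, ‖(PᵗAP)⁻¹‖ ≤ ‖A⁻¹‖ · ‖(PᵗP)⁻¹‖. -/
/-!
For SPD `S`, Cauchy–Schwarz in the inner product `⟨x, y⟩_S = x ⬝ S y`, applied to `x` and `S⁻¹ x`,
gives `|x|² ≤ ‖S⁻¹‖ ⟨x, x⟩_S`. Conversely, a bound `|x|² ≤ c (x ⬝ S x)` for all `x` forces `S` to be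
invertible with `‖S⁻¹‖ ≤ c` (take `x = S⁻¹ u` with `|u| = 1`). With `M = Pᵀ A P` and `B = Pᵀ P`:
`|z|² ≤ ‖B⁻¹‖ |P z|² ≤ ‖B⁻¹‖ ‖A⁻¹‖ (P z ⬝ A P z) = ‖B⁻¹‖ ‖A⁻¹‖ (z ⬝ M z)`.
-/

open Matrix

noncomputable def vnorm {n : ℕ} (x : Fin n → ℝ) : ℝ := Real.sqrt (x ⬝ᵥ x)

noncomputable def enorm {n : ℕ} (A : Matrix (Fin n) (Fin n) ℝ) (x : Fin n → ℝ) : ℝ :=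
  Real.sqrt (A.mulVec x ⬝ᵥ x)

noncomputable def specNorm {m n : ℕ} (M : Matrix (Fin m) (Fin n) ℝ) : ℝ :=
  ⨆ x : {x : Fin n → ℝ // vnorm x = 1}, vnorm (M.mulVec x.1)

noncomputable def eOpNorm {n : ℕ} (A M : Matrix (Fin n) (Fin n) ℝ) : ℝ :=
  ⨆ x : {x : Fin n → ℝ // enorm A x = 1}, enorm A (M.mulVec x.1)

/-- P has full column rank. -/
def FullColRank {n nc : ℕ} (P : Matrix (Fin n) (Fin nc) ℝ) : Prop :=
  LinearIndependent ℝ (fun j : Fin nc => (fun i : Fin n => P i j))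

lemma le_of_mul_self_le_mul {a b : ℝ} (hb : 0 ≤ b) (h : a * a ≤ b * a) : a ≤ b := by
  nlinarith

lemma Matrix.PosSemidef.dotProduct_mulVec_sq_le {ι : Type*} [Fintype ι] {S : Matrix ι ι ℝ}
    (hS : S.PosSemidef) (u v : ι → ℝ) :
    (u ⬝ᵥ S *ᵥ v) ^ 2 ≤ (u ⬝ᵥ S *ᵥ u) * (v ⬝ᵥ S *ᵥ v) := by
  let _ := S.toSeminormedAddCommGroup hS
  let _ := S.toInnerProductSpace hS
  have hinner (x y : ι → ℝ) : inner ℝ x y = x ⬝ᵥ S *ᵥ y := by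
    change (S *ᵥ y) ⬝ᵥ star x = _
    rw [star_trivial, dotProduct_comm]
  simpa only [hinner, sq] using real_inner_mul_inner_self_le u v

lemma dotProduct_transpose_mul_mul_mulVec {ι κ : Type*} [Fintype ι] [Fintype κ]
    (P : Matrix ι κ ℝ) (S : Matrix ι ι ℝ) (x : κ → ℝ) :
    x ⬝ᵥ (Pᵀ * S * P) *ᵥ x = P *ᵥ x ⬝ᵥ S *ᵥ (P *ᵥ x) := by
  rw [← mulVec_mulVec, ← mulVec_mulVec, dotProduct_mulVec, vecMul_transpose]

lemma dotProduct_transpose_mul_mulVec {ι κ : Type*} [Fintype ι] [Fintype κ]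
    (P : Matrix ι κ ℝ) (x : κ → ℝ) : x ⬝ᵥ (Pᵀ * P) *ᵥ x = P *ᵥ x ⬝ᵥ P *ᵥ x := by
  rw [← mulVec_mulVec, dotProduct_mulVec, vecMul_transpose]

section Fin

variable {m n : ℕ}

lemma vnorm_eq_norm (x : Fin n → ℝ) : vnorm x = ‖WithLp.toLp 2 x‖ := by
  rw [vnorm, EuclideanSpace.norm_eq]
  simp [dotProduct, sq]

lemma vnorm_nonneg (x : Fin n → ℝ) : 0 ≤ vnorm x := Real.sqrt_nonneg _

lemma vnorm_mul_self (x : Fin n → ℝ) : vnorm x * vnorm x = x ⬝ᵥ x :=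
  Real.mul_self_sqrt (by simpa using dotProduct_star_self_nonneg x)

lemma vnorm_smul (c : ℝ) (x : Fin n → ℝ) : vnorm (c • x) = |c| * vnorm x := by
  simp only [vnorm_eq_norm, WithLp.toLp_smul, norm_smul, Real.norm_eq_abs]

lemma dotProduct_le_vnorm_mul_vnorm (x y : Fin n → ℝ) : x ⬝ᵥ y ≤ vnorm x * vnorm y := by
  rw [vnorm_eq_norm, vnorm_eq_norm]
  convert real_inner_le_norm (WithLp.toLp 2 x) (WithLp.toLp 2 y) using 1
  simp [EuclideanSpace.inner_eq_star_dotProduct, dotProduct_comm]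

open scoped Matrix.Norms.L2Operator in
lemma specNorm_bddAbove (M : Matrix (Fin m) (Fin n) ℝ) :
    BddAbove (Set.range fun x : {x : Fin n → ℝ // vnorm x = 1} => vnorm (M *ᵥ x.1)) := by
  refine ⟨‖M‖, ?_⟩
  rintro _ ⟨⟨x, hx⟩, rfl⟩
  show vnorm (M *ᵥ x) ≤ ‖M‖
  rw [vnorm_eq_norm] at hx ⊢
  simpa [hx] using M.l2_opNorm_mulVec (WithLp.toLp 2 x)

lemma specNorm_nonneg (M : Matrix (Fin m) (Fin n) ℝ) : 0 ≤ specNorm M :=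
  Real.iSup_nonneg fun _ => vnorm_nonneg _

lemma vnorm_mulVec_le (M : Matrix (Fin m) (Fin n) ℝ) (x : Fin n → ℝ) :
    vnorm (M *ᵥ x) ≤ specNorm M * vnorm x := by
  rcases (vnorm_nonneg x).eq_or_lt with hx | hx
  · have : x = 0 := by
      simpa [vnorm_eq_norm] using hx.symm
    simp [this, vnorm]
  · have hunit : vnorm ((vnorm x)⁻¹ • x) = 1 := by
      rw [vnorm_smul, abs_of_pos (inv_pos.mpr hx), inv_mul_cancel₀ hx.ne']
    have hle := le_ciSup (specNorm_bddAbove M) ⟨_, hunit⟩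
    simp only [mulVec_smul, vnorm_smul, abs_of_pos (inv_pos.mpr hx)] at hle
    rwa [inv_mul_le_iff₀ hx, mul_comm] at hle

lemma Matrix.PosDef.dotProduct_self_le_specNorm_inv_mul {S : Matrix (Fin n) (Fin n) ℝ}
    (hS : S.PosDef) (x : Fin n → ℝ) : x ⬝ᵥ x ≤ specNorm S⁻¹ * (x ⬝ᵥ S *ᵥ x) := by
  have hcs := hS.posSemidef.dotProduct_mulVec_sq_le x (S⁻¹ *ᵥ x)
  rw [mulVec_mulVec, mul_nonsing_inv _ ((isUnit_iff_isUnit_det S).mp hS.isUnit), one_mulVec] at hcs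
  have hinv : S⁻¹ *ᵥ x ⬝ᵥ x ≤ specNorm S⁻¹ * (x ⬝ᵥ x) :=
    calc S⁻¹ *ᵥ x ⬝ᵥ x ≤ vnorm (S⁻¹ *ᵥ x) * vnorm x := dotProduct_le_vnorm_mul_vnorm _ _
      _ ≤ specNorm S⁻¹ * vnorm x * vnorm x := by
          gcongr
          · exact vnorm_nonneg x
          · exact vnorm_mulVec_le _ _
      _ = specNorm S⁻¹ * (x ⬝ᵥ x) := by rw [mul_assoc, vnorm_mul_self]
  have hq : 0 ≤ x ⬝ᵥ S *ᵥ x := by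
    simpa using hS.posSemidef.dotProduct_mulVec_nonneg x
  refine le_of_mul_self_le_mul (mul_nonneg (specNorm_nonneg _) hq) ?_
  calc (x ⬝ᵥ x) * (x ⬝ᵥ x) ≤ (x ⬝ᵥ S *ᵥ x) * (S⁻¹ *ᵥ x ⬝ᵥ x) := by rw [← sq]; exact hcs
    _ ≤ (x ⬝ᵥ S *ᵥ x) * (specNorm S⁻¹ * (x ⬝ᵥ x)) := mul_le_mul_of_nonneg_left hinv hq
    _ = specNorm S⁻¹ * (x ⬝ᵥ S *ᵥ x) * (x ⬝ᵥ x) := by ring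

lemma specNorm_inv_le_of_forall {M : Matrix (Fin n) (Fin n) ℝ} {c : ℝ} (hc : 0 ≤ c)
    (h : ∀ z, z ⬝ᵥ z ≤ c * (z ⬝ᵥ M *ᵥ z)) : specNorm M⁻¹ ≤ c := by
  have hM : IsUnit M := by
    refine mulVec_injective_iff_isUnit.mp fun z w hzw => sub_eq_zero.mp ?_
    have hzero := h (z - w)
    rw [mulVec_sub, hzw, sub_self, dotProduct_zero, mul_zero] at hzero
    have hnonneg : 0 ≤ (z - w) ⬝ᵥ (z - w) := by simpa using dotProduct_star_self_nonneg (z - w)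
    exact dotProduct_self_eq_zero.mp (hzero.antisymm hnonneg)
  refine Real.iSup_le (fun ⟨u, hu⟩ => ?_) hc
  set z := M⁻¹ *ᵥ u
  have hMz : M *ᵥ z = u := by
    rw [mulVec_mulVec, mul_nonsing_inv _ ((isUnit_iff_isUnit_det M).mp hM), one_mulVec]
  refine le_of_mul_self_le_mul hc ?_
  calc vnorm z * vnorm z = z ⬝ᵥ z := vnorm_mul_self z
    _ ≤ c * (z ⬝ᵥ u) := hMz ▸ h z
    _ ≤ c * vnorm z := by
        gcongr
        simpa [hu] using dotProduct_le_vnorm_mul_vnorm z u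

end Fin

theorem stmt4 {n nc : ℕ} (A : Matrix (Fin n) (Fin n) ℝ) (P : Matrix (Fin n) (Fin nc) ℝ)
    (hA : A.PosDef) (hP : FullColRank P) :
    specNorm (Pᵀ * A * P)⁻¹ ≤ specNorm A⁻¹ * specNorm (Pᵀ * P)⁻¹ := by
  have hPinj : Function.Injective P.mulVec := mulVec_injective_iff.mpr hP
  have hB : (Pᵀ * P).PosDef := by
    simpa [conjTranspose_eq_transpose_of_trivial] using PosDef.conjTranspose_mul_self P hPinj
  refine specNorm_inv_le_of_forall (mul_nonneg (specNorm_nonneg _) (specNorm_nonneg _)) fun z => ?_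
  calc z ⬝ᵥ z ≤ specNorm (Pᵀ * P)⁻¹ * (P *ᵥ z ⬝ᵥ P *ᵥ z) := by
        simpa only [dotProduct_transpose_mul_mulVec] using hB.dotProduct_self_le_specNorm_inv_mul z
    _ ≤ specNorm (Pᵀ * P)⁻¹ * (specNorm A⁻¹ * (P *ᵥ z ⬝ᵥ A *ᵥ (P *ᵥ z))) := by
        gcongr
        · exact specNorm_nonneg _
        · exact hA.dotProduct_self_le_specNorm_inv_mul _
    _ = specNorm A⁻¹ * specNorm (Pᵀ * P)⁻¹ * (z ⬝ᵥ (Pᵀ * A * P) *ᵥ z) := by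
        rw [dotProduct_transpose_mul_mul_mulVec]
        ring
end

section
/- Let A be an n×n SPD matrix, P an n×n_c matrix of full column rank, b ∈ ℝⁿ, b_c = Pᵗb, A_c = PᵗAP. Suppose ‖x_c − A_c⁻¹ b_c‖_{A_c} ≤ C h_c^q ‖A_c⁻¹ b_c‖_{A_c} and ‖P A_c⁻¹ b_c − A⁻¹ b‖_A ≤ C h_c^q ‖A⁻¹b‖_A for constants C, h_c, q > 0. Then ‖P x_c − A⁻¹ b‖_A ≤ √2 · C h_c^q · ‖A⁻¹ b‖_A. -/
open Matrix

theorem FullColRank.mulVec_injective {n nc : ℕ} {P : Matrix (Fin n) (Fin nc) ℝ}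
    (hP : FullColRank P) : Function.Injective P.mulVec :=
  mulVec_injective_iff.mpr hP

theorem Matrix.PosSemidef.isSymm {n : Type*} {A : Matrix n n ℝ} (hA : A.PosSemidef) :
    A.IsSymm :=
  (conjTranspose_eq_transpose_of_trivial A).symm.trans hA.isHermitian.eq

section
variable {m n : Type*} [Fintype m] [Fintype n]

theorem Matrix.PosDef.transpose_mul_mul_same {A : Matrix n n ℝ} (hA : A.PosDef)
    {P : Matrix n m ℝ} (hP : Function.Injective P.mulVec) : (Pᵀ * A * P).PosDef := by
  simpa only [conjTranspose_eq_transpose_of_trivial] using hA.conjTranspose_mul_mul_same hP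

theorem Matrix.IsSymm.mulVec_dotProduct_comm {A : Matrix n n ℝ} (hA : A.IsSymm) (x y : n → ℝ) :
    A *ᵥ x ⬝ᵥ y = A *ᵥ y ⬝ᵥ x := by
  rw [dotProduct_comm, dotProduct_mulVec, ← mulVec_transpose, hA.eq]

theorem Matrix.mulVec_mulVec_dotProduct_self (A : Matrix n n ℝ) (P : Matrix n m ℝ)
    (u : m → ℝ) : A *ᵥ (P *ᵥ u) ⬝ᵥ P *ᵥ u = (Pᵀ * A * P) *ᵥ u ⬝ᵥ u := by
  rw [← mulVec_mulVec, ← mulVec_mulVec, mulVec_transpose, ← dotProduct_mulVec]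

theorem Matrix.galerkin_orthogonal [DecidableEq m] [DecidableEq n] {A : Matrix n n ℝ}
    (P : Matrix n m ℝ) (hA : A.IsSymm) (hAdet : IsUnit A.det)
    (hAcdet : IsUnit (Pᵀ * A * P).det) (b : n → ℝ) (u : m → ℝ) :
    A *ᵥ (P *ᵥ u) ⬝ᵥ (P *ᵥ ((Pᵀ * A * P)⁻¹ *ᵥ (Pᵀ *ᵥ b)) - A⁻¹ *ᵥ b) = 0 := by
  have hresidual : Pᵀ *ᵥ (A *ᵥ (P *ᵥ ((Pᵀ * A * P)⁻¹ *ᵥ (Pᵀ *ᵥ b)) - A⁻¹ *ᵥ b)) = 0 := by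
    simp only [mulVec_sub, mulVec_mulVec, ← Matrix.mul_assoc, mul_nonsing_inv _ hAcdet,
      mul_nonsing_inv _ hAdet, Matrix.one_mul, Matrix.mul_one, sub_self]
  rw [hA.mulVec_dotProduct_comm, dotProduct_mulVec, ← mulVec_transpose, hresidual,
    zero_dotProduct]

end

section
variable {n m : ℕ} {A : Matrix (Fin n) (Fin n) ℝ}

theorem enorm_nonneg (A : Matrix (Fin n) (Fin n) ℝ) (x : Fin n → ℝ) : 0 ≤ enorm A x :=
  Real.sqrt_nonneg _

theorem enorm_sq (hA : A.PosSemidef) (x : Fin n → ℝ) : enorm A x ^ 2 = A *ᵥ x ⬝ᵥ x :=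
  Real.sq_sqrt (by simpa [dotProduct_comm] using hA.dotProduct_mulVec_nonneg x)

theorem enorm_mulVec (A : Matrix (Fin n) (Fin n) ℝ) (P : Matrix (Fin n) (Fin m) ℝ)
    (u : Fin m → ℝ) : enorm A (P *ᵥ u) = enorm (Pᵀ * A * P) u :=
  congrArg Real.sqrt (mulVec_mulVec_dotProduct_self A P u)

theorem enorm_add_sq_of_dotProduct_eq_zero (hA : A.PosSemidef) {x y : Fin n → ℝ}
    (hxy : A *ᵥ x ⬝ᵥ y = 0) : enorm A (x + y) ^ 2 = enorm A x ^ 2 + enorm A y ^ 2 := by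
  have hyx : A *ᵥ y ⬝ᵥ x = 0 := hA.isSymm.mulVec_dotProduct_comm x y ▸ hxy
  rw [enorm_sq hA, enorm_sq hA, enorm_sq hA, mulVec_add, add_dotProduct, dotProduct_add,
    dotProduct_add, hxy, hyx, add_zero, zero_add]

theorem enorm_le_of_dotProduct_sub_eq_zero (hA : A.PosSemidef) {x z : Fin n → ℝ}
    (hx : A *ᵥ x ⬝ᵥ (z - x) = 0) : enorm A x ≤ enorm A z := by
  refine le_of_pow_le_pow_left₀ two_ne_zero (enorm_nonneg A z) ?_
  rw [← add_sub_cancel x z, enorm_add_sq_of_dotProduct_eq_zero hA hx]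
  exact le_add_of_nonneg_right (sq_nonneg _)

end

theorem stmt7_general {n nc : ℕ} (A : Matrix (Fin n) (Fin n) ℝ) (P : Matrix (Fin n) (Fin nc) ℝ)
    (hA : A.PosDef) (hP : FullColRank P) (b : Fin n → ℝ)
    (Ac : Matrix (Fin nc) (Fin nc) ℝ) (bc : Fin nc → ℝ)
    (hAc : Ac = Pᵀ * A * P) (hbc : bc = Pᵀ.mulVec b)
    (xc : Fin nc → ℝ) (C hc q : ℝ) (hC : 0 < C) (hhc : 0 < hc)
    (h1 : enorm Ac (xc - Ac⁻¹.mulVec bc) ≤ C * hc ^ q * enorm Ac (Ac⁻¹.mulVec bc))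
    (h2 : enorm A (P.mulVec (Ac⁻¹.mulVec bc) - A⁻¹.mulVec b)
        ≤ C * hc ^ q * enorm A (A⁻¹.mulVec b)) :
    enorm A (P.mulVec xc - A⁻¹.mulVec b)
      ≤ Real.sqrt 2 * (C * hc ^ q) * enorm A (A⁻¹.mulVec b) := by
  subst hAc hbc
  set w := (Pᵀ * A * P)⁻¹ *ᵥ (Pᵀ *ᵥ b)
  set z := A⁻¹ *ᵥ b
  set K := C * hc ^ q
  have horth : ∀ u, A *ᵥ (P *ᵥ u) ⬝ᵥ (P *ᵥ w - z) = 0 :=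
    galerkin_orthogonal P hA.posSemidef.isSymm ((isUnit_iff_isUnit_det A).mp hA.isUnit)
      ((isUnit_iff_isUnit_det _).mp (hA.transpose_mul_mul_same hP.mulVec_injective).isUnit) b
  have hcoarse : enorm (Pᵀ * A * P) w ≤ enorm A z := by
    rw [← enorm_mulVec]
    refine enorm_le_of_dotProduct_sub_eq_zero hA.posSemidef ?_
    rw [← neg_sub, dotProduct_neg, horth, neg_zero]
  have hsplit : P *ᵥ xc - z = P *ᵥ (xc - w) + (P *ᵥ w - z) := by
    rw [mulVec_sub]; abel
  refine le_of_pow_le_pow_left₀ two_ne_zero (mul_nonneg (by positivity) (enorm_nonneg A z)) ?_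
  calc enorm A (P *ᵥ xc - z) ^ 2
      = enorm (Pᵀ * A * P) (xc - w) ^ 2 + enorm A (P *ᵥ w - z) ^ 2 := by
        rw [hsplit, enorm_add_sq_of_dotProduct_eq_zero hA.posSemidef (horth _), enorm_mulVec]
    _ ≤ (K * enorm A z) ^ 2 + (K * enorm A z) ^ 2 := by
        gcongr
        · exact enorm_nonneg _ _
        · exact h1.trans (by gcongr)
        · exact enorm_nonneg _ _
    _ = (Real.sqrt 2 * K * enorm A z) ^ 2 := by
        rw [mul_pow (Real.sqrt 2 * K), mul_pow (Real.sqrt 2), Real.sq_sqrt zero_le_two]; ring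

theorem stmt7 {n nc : ℕ} (A : Matrix (Fin n) (Fin n) ℝ) (P : Matrix (Fin n) (Fin nc) ℝ)
    (hA : A.PosDef) (hP : FullColRank P) (b : Fin n → ℝ)
    (Ac : Matrix (Fin nc) (Fin nc) ℝ) (bc : Fin nc → ℝ)
    (hAc : Ac = Pᵀ * A * P) (hbc : bc = Pᵀ.mulVec b)
    (xc : Fin nc → ℝ) (C hc q : ℝ) (hC : 0 < C) (hhc : 0 < hc) (hq : 0 < q)
    (h1 : enorm Ac (xc - Ac⁻¹.mulVec bc) ≤ C * hc ^ q * enorm Ac (Ac⁻¹.mulVec bc))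
    (h2 : enorm A (P.mulVec (Ac⁻¹.mulVec bc) - A⁻¹.mulVec b)
        ≤ C * hc ^ q * enorm A (A⁻¹.mulVec b)) :
    enorm A (P.mulVec xc - A⁻¹.mulVec b)
      ≤ Real.sqrt 2 * (C * hc ^ q) * enorm A (A⁻¹.mulVec b) :=
  stmt7_general A P hA hP b Ac bc hAc hbc xc C hc q hC hhc h1 h2
end
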